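/- arXiv:1211.4267 — 5 statements merged into one kernel-verified Lean document; each statement's English description precedes it below -/
import Mathlib

section
/- Fix r₀ > 0 and define μ : ℝ≥0 → ℝ≥0 by cosh(μ(t)) = cosh²(r₀) − sinh²(r₀)·cos( min{π, t/sinh(r₀)} ). Then μ is nondecreasing, μ(t) ≤ t for all t ≥ 0, and μ is constant equal to 2r₀ on [π sinh r₀, ∞). -/
/-!
By the hyperbolic law of cosines, `μ t` is the base of an isosceles geodesic triangle with legs
`r₀` and apex angle `θ = min π (t / sinh r₀)`. It grows with `θ` as long as `θ ≤ π`, it is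
bounded by the length `sinh r₀ * θ ≤ t` of the circular arc of radius `r₀` joining its endpoints
(in the form `1 - cos θ ≤ θ ^ 2 / 2` and `1 + x ^ 2 / 2 ≤ cosh x`), and at `θ = π` the triangle
degenerates into a diameter of length `2 r₀`.
-/

open Real Set

namespace Real

lemma one_add_sq_div_two_le_cosh (x : ℝ) : 1 + x ^ 2 / 2 ≤ cosh x := by
  have hsinh : |x / 2| ≤ |sinh (x / 2)| := by
    rw [abs_sinh]
    exact self_le_sinh_iff.2 (abs_nonneg _)
  have hcosh : cosh x = 1 + 2 * sinh (x / 2) ^ 2 := by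
    have h := cosh_two_mul (x / 2)
    rw [mul_div_cancel₀ x two_ne_zero, cosh_sq'] at h
    linarith
  calc 1 + x ^ 2 / 2 = 1 + 2 * |x / 2| ^ 2 := by rw [sq_abs]; ring
    _ ≤ 1 + 2 * |sinh (x / 2)| ^ 2 := by gcongr
    _ = cosh x := by rw [sq_abs, hcosh]

lemma monotoneOn_cosh_sq_sub_sinh_sq_mul_cos (r : ℝ) :
    MonotoneOn (fun θ ↦ cosh r ^ 2 - sinh r ^ 2 * cos θ) (Icc 0 π) :=
  fun _ ha _ hb hab ↦ sub_le_sub_left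
    (mul_le_mul_of_nonneg_left (cos_le_cos_of_nonneg_of_le_pi ha.1 hb.2 hab) (sq_nonneg _)) _

lemma cosh_sq_sub_sinh_sq_mul_cos_le_cosh {r θ t : ℝ} (h : |sinh r * θ| ≤ |t|) :
    cosh r ^ 2 - sinh r ^ 2 * cos θ ≤ cosh t := by
  have hsq : (sinh r * θ) ^ 2 ≤ t ^ 2 := sq_le_sq.2 h
  calc cosh r ^ 2 - sinh r ^ 2 * cos θ = 1 + sinh r ^ 2 * (1 - cos θ) := by
        rw [cosh_sq']; ring
    _ ≤ 1 + sinh r ^ 2 * (θ ^ 2 / 2) := by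
        gcongr
        linarith [one_sub_sq_div_two_le_cos (x := θ)]
    _ = 1 + (sinh r * θ) ^ 2 / 2 := by ring
    _ ≤ 1 + t ^ 2 / 2 := by gcongr
    _ ≤ cosh t := one_add_sq_div_two_le_cosh t

lemma cosh_sq_sub_sinh_sq_mul_cos_pi (r : ℝ) : cosh r ^ 2 - sinh r ^ 2 * cos π = cosh (2 * r) := by
  rw [cos_pi, cosh_two_mul]
  ring

end Real

lemma monotoneOn_of_monotoneOn_cosh_comp {α : Type*} [Preorder α] {f : α → ℝ} {s : Set α}
    (hf : ∀ x ∈ s, 0 ≤ f x) (h : MonotoneOn (cosh ∘ f) s) : MonotoneOn f s :=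
  fun _ ha _ hb hab ↦ (cosh_strictMonoOn.le_iff_le (hf _ ha) (hf _ hb)).1 (h ha hb hab)

/-- Properties of the comparison function μ of the hyperbolic cone of radius r₀:
μ is nondecreasing on [0,∞), μ(t) ≤ t, and μ ≡ 2r₀ on [π sinh r₀, ∞). -/
theorem cone_comparison_function_properties
    (r₀ : ℝ) (hr₀ : 0 < r₀) (μ : ℝ → ℝ)
    (hμ_nonneg : ∀ t : ℝ, 0 ≤ t → 0 ≤ μ t)
    (hμ : ∀ t : ℝ, 0 ≤ t →
      Real.cosh (μ t) =
        Real.cosh r₀ ^ 2 -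
          Real.sinh r₀ ^ 2 * Real.cos (min π (t / Real.sinh r₀))) :
    (MonotoneOn μ (Set.Ici (0 : ℝ))) ∧
    (∀ t : ℝ, 0 ≤ t → μ t ≤ t) ∧
    (∀ t : ℝ, π * Real.sinh r₀ ≤ t → μ t = 2 * r₀) := by
  have hs : 0 < sinh r₀ := sinh_pos_iff.2 hr₀
  set θ : ℝ → ℝ := fun t ↦ min π (t / sinh r₀)
  have hθ_mono : Monotone θ := fun a b hab ↦ min_le_min_left _ (by gcongr)
  have hθ_mem : MapsTo θ (Ici 0) (Icc 0 π) :=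
    fun t ht ↦ ⟨le_min pi_pos.le (div_nonneg ht hs.le), min_le_left _ _⟩
  refine ⟨?_, fun t ht ↦ ?_, fun t ht ↦ ?_⟩
  · refine monotoneOn_of_monotoneOn_cosh_comp hμ_nonneg fun a ha b hb hab ↦ ?_
    simp only [Function.comp_apply, hμ a ha, hμ b hb]
    exact monotoneOn_cosh_sq_sub_sinh_sq_mul_cos r₀ (hθ_mem ha) (hθ_mem hb) (hθ_mono hab)
  · have harc : |sinh r₀ * θ t| ≤ |t| := by
      rw [abs_of_nonneg (mul_nonneg hs.le (hθ_mem ht).1), abs_of_nonneg ht]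
      calc sinh r₀ * θ t ≤ sinh r₀ * (t / sinh r₀) := by gcongr; exact min_le_right _ _
        _ = t := mul_div_cancel₀ t hs.ne'
    exact (cosh_strictMonoOn.le_iff_le (hμ_nonneg t ht) ht).1
      ((hμ t ht).trans_le (cosh_sq_sub_sinh_sq_mul_cos_le_cosh harc))
  · have ht0 : 0 ≤ t := le_trans (by positivity) ht
    have hθπ : min π (t / sinh r₀) = π := min_eq_left ((le_div_iff₀ hs).2 ht)
    refine cosh_injOn (hμ_nonneg t ht0) (by simp only [mem_Ici]; positivity) ?_
    rw [hμ t ht0, hθπ, cosh_sq_sub_sinh_sq_mul_cos_pi]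
end

section
/- Fix r₀ > 0 and let μ be defined by cosh(μ(t)) = cosh²(r₀) − sinh²(r₀)·cos(min{π, t/sinh r₀}). Then for every t ∈ [0, π sinh r₀], one has t ≤ π · sinh(μ(t)/2). -/
open Real

/-!
By the half-angle formulas `cosh μ = 1 + 2 sinh² (μ/2)` and `cos θ = 1 - 2 sin² (θ/2)`, the defining
relation of `μ` with `θ = t / sinh r₀` becomes `sinh (μ(t)/2) = sinh r₀ · sin (θ/2)`, and Jordan's
inequality `sin (θ/2) ≥ θ/π` on `[0, π]` turns this into `π sinh (μ(t)/2) ≥ sinh r₀ · θ = t`.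
-/

namespace Real

theorem cos_eq_one_sub_two_mul_sin_half_sq (θ : ℝ) : cos θ = 1 - 2 * sin (θ / 2) ^ 2 := by
  have h := cos_sq (θ / 2)
  rw [cos_sq', mul_div_cancel₀ θ two_ne_zero] at h
  linarith

theorem cosh_eq_one_add_two_mul_sinh_half_sq (x : ℝ) : cosh x = 1 + 2 * sinh (x / 2) ^ 2 := by
  have h := cosh_two_mul (x / 2)
  rw [cosh_sq, mul_div_cancel₀ x two_ne_zero] at h
  linarith

/-- Half-angle form of the hyperbolic law of cosines for an isosceles triangle with legs `r`
and apex angle `θ`. -/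
theorem sinh_half_eq_of_cosh_eq {r x θ : ℝ} (hr : 0 ≤ r) (hx : 0 ≤ x) (hθ₀ : 0 ≤ θ)
    (hθ : θ ≤ 2 * π) (h : cosh x = cosh r ^ 2 - sinh r ^ 2 * cos θ) :
    sinh (x / 2) = sinh r * sin (θ / 2) := by
  have hsq : sinh (x / 2) ^ 2 = (sinh r * sin (θ / 2)) ^ 2 := by
    rw [cosh_eq_one_add_two_mul_sinh_half_sq, cos_eq_one_sub_two_mul_sin_half_sq, cosh_sq'] at h
    linarith
  refine (pow_left_inj₀ ?_ ?_ two_ne_zero).1 hsq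
  · exact sinh_nonneg_iff.2 (by linarith)
  · exact mul_nonneg (sinh_nonneg_iff.2 hr) (sin_nonneg_of_nonneg_of_le_pi (by linarith) (by linarith))

theorem le_pi_mul_sin_half {θ : ℝ} (hθ₀ : 0 ≤ θ) (hθ : θ ≤ π) : θ ≤ π * sin (θ / 2) := by
  have hjordan := mul_le_sin (x := θ / 2) (by linarith) (by linarith)
  calc θ = π * (2 / π * (θ / 2)) := by field_simp
    _ ≤ π * sin (θ / 2) := mul_le_mul_of_nonneg_left hjordan pi_pos.le

end Real

/-- For the comparison function μ of the hyperbolic cone of radius r₀,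
for every t ∈ [0, π sinh r₀] one has t ≤ π sinh(μ(t)/2). -/
theorem cone_comparison_function_lower_bound
    (r₀ : ℝ) (hr₀ : 0 < r₀) (μ : ℝ → ℝ)
    (hμ_nonneg : ∀ t : ℝ, 0 ≤ t → 0 ≤ μ t)
    (hμ : ∀ t : ℝ, 0 ≤ t →
      Real.cosh (μ t) =
        Real.cosh r₀ ^ 2 -
          Real.sinh r₀ ^ 2 * Real.cos (min π (t / Real.sinh r₀))) :
    ∀ t : ℝ, t ∈ Set.Icc 0 (π * Real.sinh r₀) →
      t ≤ π * Real.sinh (μ t / 2) := by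
  rintro t ⟨ht₀, ht⟩
  have hs : 0 < sinh r₀ := sinh_pos_iff.2 hr₀
  set θ := t / sinh r₀
  have hθ₀ : 0 ≤ θ := div_nonneg ht₀ hs.le
  have hθ : θ ≤ π := (div_le_iff₀ hs).2 ht
  have hcosh := hμ t ht₀
  rw [min_eq_right hθ] at hcosh
  have hsinh := sinh_half_eq_of_cosh_eq hr₀.le (hμ_nonneg t ht₀) hθ₀ (by linarith [pi_pos]) hcosh
  calc t = sinh r₀ * θ := (mul_div_cancel₀ t hs.ne').symm
    _ ≤ sinh r₀ * (π * sin (θ / 2)) := mul_le_mul_of_nonneg_left (le_pi_mul_sin_half hθ₀ hθ) hs.le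
    _ = π * sinh (μ t / 2) := by rw [hsinh]; ring
end

section
/- Let X be a δ-hyperbolic metric space and Y an α-quasi-convex subset. Let x ∈ X and let p be an η-projection of x on Y. Then for every x' ∈ X, p is an ε-projection of x' on Y, where ε = (x|p)_{x'} + 2α + 2η + 2δ. -/
/-- Extending projections on a quasi-convex: if p is an η-projection of x on
an α-quasi-convex subset Y, then for every x', p is an ε-projection of x'
on Y with ε = (x|p)_{x'} + 2α + 2η + 2δ. -/
theorem projection_quasiconvex_extend
    {X : Type*} [MetricSpace X] (δ : ℝ) (hδ : 0 ≤ δ)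
    (hyp : ∀ x y z t : X,
      (dist t x + dist t z - dist x z) / 2 ≥
        min ((dist t x + dist t y - dist x y) / 2)
            ((dist t y + dist t z - dist y z) / 2) - δ)
    (Y : Set X) (α : ℝ) (hα : 0 ≤ α)
    (hqc : ∀ x : X, ∀ y ∈ Y, ∀ y' ∈ Y,
      Metric.infDist x Y ≤ (dist x y + dist x y' - dist y y') / 2 + α)
    (x : X) (p : X) (hp : p ∈ Y) (η : ℝ) (hη : 0 ≤ η)
    (hproj : dist x p ≤ Metric.infDist x Y + η) :
    ∀ x' : X,
      dist x' p ≤ Metric.infDist x' Y +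
        ((dist x' x + dist x' p - dist x p) / 2 + 2 * α + 2 * η + 2 * δ) := by
  intro x'
  have hne : Y.Nonempty := ⟨p, hp⟩
  have key : ∀ y ∈ Y,
      dist x' p - ((dist x' x + dist x' p - dist x p) / 2 + 2*α + 2*η + 2*δ)
        ≤ dist x' y := by
    intro y hy
    have h1 := hqc x p hp y hy
    have h2 : Metric.infDist x Y ≤ dist x y := Metric.infDist_le_dist_of_mem hy
    have h3 := hyp x' y p x
    have hc1 : dist x x' = dist x' x := dist_comm x x'
    have hc2 : dist x p = dist p x := dist_comm x p
    have hc3 : dist x y = dist y x := dist_comm x y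
    have hc4 : dist x' y = dist y x' := dist_comm x' y
    have hc5 : dist x' p = dist p x' := dist_comm x' p
    have hc6 : dist y p = dist p y := dist_comm y p
    have htri : dist x y ≤ dist x x' + dist x' y := dist_triangle x x' y
    have hnn : (0:ℝ) ≤ dist x' y := dist_nonneg
    rcases min_cases ((dist x x' + dist x y - dist x' y) / 2)
        ((dist x y + dist x p - dist y p) / 2) with ⟨hmin, _⟩ | ⟨hmin, _⟩ <;>
      rw [hmin] at h3 <;> linarith
  have hfin : dist x' p - ((dist x' x + dist x' p - dist x p) / 2 + 2*α + 2*η + 2*δ)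
      ≤ Metric.infDist x' Y := by
    rw [Metric.infDist_eq_iInf]
    have : Nonempty Y := hne.to_subtype
    exact le_ciInf fun ⟨y, hy⟩ => key y hy
  linarith
end

section
/- Let X be a geodesic metric space, Y ⊆ X a subset, and x, x', z ∈ X. For a geodesic segment [x,x'] define Δ([x,x'],Y) = (1/2) sup over p,p' ∈ [x,x'], y,y' ∈ Y of max{0, d(p,p') + d(y,y') − d(p,y) − d(p',y')}. Then Δ([x,z],Y) ≤ Δ([x,x'],Y) + (x|x')_z, where (x|x')_z is the Gromov product at z. -/
/-!
For `p` before `p'` on `[x,z]` and `y, y' ∈ Y`, the triangle inequalities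
`d(x,y) ≤ d(x,p) + d(p,y)` and `d(x',y') ≤ d(x',z) + d(z,p') + d(p',y')`, together with
`d(x,p) + d(p,p') + d(p',z) = d(x,z)`, bound the overlap term of `(p,p',y,y')` by that of
`(x,x',y,y')` plus `2 (x|x')_z`; and `x, x'` are points of `[x,x']`.
-/

open ENNReal

/-- The overlap quantity Δ(Y,Z), valued in ℝ≥0∞. -/
noncomputable def overlap {X : Type*} [MetricSpace X] (Y Z : Set X) : ℝ≥0∞ :=
  ⨆ y ∈ Y, ⨆ y' ∈ Y, ⨆ z ∈ Z, ⨆ z' ∈ Z,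
    ENNReal.ofReal ((dist y y' + dist z z' - dist y z - dist y' z') / 2)

/-- `γ` parametrizes a geodesic from `x` to `x'` (by arc length on
`[0, dist x x']`). -/
def IsGeodesicFrom {X : Type*} [MetricSpace X] (γ : ℝ → X) (x x' : X) : Prop :=
  γ 0 = x ∧ γ (dist x x') = x' ∧
    ∀ s ∈ Set.Icc (0 : ℝ) (dist x x'), ∀ t ∈ Set.Icc (0 : ℝ) (dist x x'),
      dist (γ s) (γ t) = |s - t|

open Set

lemma ofReal_le_overlap {X : Type*} [MetricSpace X] {Y Z : Set X} {y y' z z' : X}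
    (hy : y ∈ Y) (hy' : y' ∈ Y) (hz : z ∈ Z) (hz' : z' ∈ Z) :
    ENNReal.ofReal ((dist y y' + dist z z' - dist y z - dist y' z') / 2) ≤ overlap Y Z :=
  le_iSup₂_of_le y hy <| le_iSup₂_of_le y' hy' <| le_iSup₂_of_le z hz <|
    le_iSup₂_of_le z' hz' le_rfl

lemma IsGeodesicFrom.dist_add_dist_add_dist {X : Type*} [MetricSpace X] {γ : ℝ → X} {x z : X}
    (hγ : IsGeodesicFrom γ x z) {s t : ℝ} (hs : s ∈ Icc 0 (dist x z)) (ht : t ∈ Icc 0 (dist x z))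
    (hst : s ≤ t) :
    dist x (γ s) + dist (γ s) (γ t) + dist (γ t) z = dist x z := by
  obtain ⟨h0, h1, hdist⟩ := hγ
  have hxs : dist x (γ s) = |0 - s| := h0 ▸ hdist 0 ⟨le_rfl, dist_nonneg⟩ s hs
  have htz : dist (γ t) z = |t - dist x z| := by
    rw [← hdist t ht _ ⟨dist_nonneg, le_rfl⟩, h1]
  rw [hxs, hdist s hs t ht, htz, abs_of_nonpos (by linarith [hs.1]),
    abs_of_nonpos (by linarith), abs_of_nonpos (by linarith [ht.2])]
  ring

lemma overlap_term_le_of_between {X : Type*} [PseudoMetricSpace X] {x x' z p p' : X}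
    (h : dist x p + dist p p' + dist p' z ≤ dist x z) (y y' : X) :
    dist p p' + dist y y' - dist p y - dist p' y' ≤
      (dist x x' + dist y y' - dist x y - dist x' y') + (dist z x + dist z x' - dist x x') := by
  have hxy := dist_triangle x p y
  have hx'y' := dist_triangle4 x' z p' y'
  rw [dist_comm z p', dist_comm x' z] at hx'y'
  rw [dist_comm z x]
  linarith

lemma ofReal_le_overlap_add_of_between {X : Type*} [MetricSpace X] {Y Z : Set X}
    {x x' z p p' y y' : X} (hx : x ∈ Z) (hx' : x' ∈ Z) (hy : y ∈ Y) (hy' : y' ∈ Y)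
    (h : dist x p + dist p p' + dist p' z ≤ dist x z) :
    ENNReal.ofReal ((dist p p' + dist y y' - dist p y - dist p' y') / 2) ≤
      overlap Z Y + ENNReal.ofReal ((dist z x + dist z x' - dist x x') / 2) :=
  calc ENNReal.ofReal ((dist p p' + dist y y' - dist p y - dist p' y') / 2)
      ≤ ENNReal.ofReal ((dist x x' + dist y y' - dist x y - dist x' y') / 2 +
          (dist z x + dist z x' - dist x x') / 2) := by
        gcongr
        rw [← add_div]
        gcongr
        exact overlap_term_le_of_between h y y'
    _ ≤ _ := ofReal_add_le.trans (by gcongr; exact ofReal_le_overlap hx hx' hy hy')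

/-- Δ([x,z],Y) ≤ Δ([x,x'],Y) + (x|x')_z. -/
theorem overlap_geodesic_le {X : Type*} [MetricSpace X] (Y : Set X)
    (x x' z : X) (γ γ' : ℝ → X)
    (hγ : IsGeodesicFrom γ x x') (hγ' : IsGeodesicFrom γ' x z) :
    overlap (γ' '' Set.Icc (0 : ℝ) (dist x z)) Y ≤
      overlap (γ '' Set.Icc (0 : ℝ) (dist x x')) Y +
        ENNReal.ofReal ((dist z x + dist z x' - dist x x') / 2) := by
  have hx : x ∈ γ '' Icc 0 (dist x x') := ⟨0, ⟨le_rfl, dist_nonneg⟩, hγ.1⟩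
  have hx' : x' ∈ γ '' Icc 0 (dist x x') := ⟨dist x x', ⟨dist_nonneg, le_rfl⟩, hγ.2.1⟩
  refine iSup₂_le fun p hp => iSup₂_le fun p' hp' => iSup₂_le fun y hy =>
    iSup₂_le fun y' hy' => ?_
  obtain ⟨s, hs, rfl⟩ := hp
  obtain ⟨t, ht, rfl⟩ := hp'
  rcases le_total s t with hst | hts
  · exact ofReal_le_overlap_add_of_between hx hx' hy hy'
      (hγ'.dist_add_dist_add_dist hs ht hst).le
  · have hswap : dist (γ' s) (γ' t) + dist y y' - dist (γ' s) y - dist (γ' t) y' =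
        dist (γ' t) (γ' s) + dist y' y - dist (γ' t) y' - dist (γ' s) y := by
      rw [dist_comm (γ' s), dist_comm y]
      ring
    rw [hswap]
    exact ofReal_le_overlap_add_of_between hx hx' hy' hy
      (hγ'.dist_add_dist_add_dist ht hs hts).le
end

section
/- Let Y be a metric space, r₀ > 0, and let H be a group acting by isometries on Y such that every nontrivial h ∈ H has translation length ℓ(h) = inf_y d(hy,y) ≥ l, where l ≥ 2π sinh r₀. Define the cone distance on pairs (y,r), (y',r') ∈ Y × [0,r₀] by cosh d((y,r),(y',r')) = cosh r cosh r' − sinh r sinh r' cos(min{π, d(y,y')/sinh r₀}), and the quotient distance d(x̄, x̄') = inf_{h∈H} d(x, hx'). If x = (y,r) and x' = (y',r') satisfy d_Y(y,y') ≤ l − π sinh r₀, then d(x̄, x̄') = d(x, x'). -/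
/-!
A nontrivial `h` moves `y'` by at least `l`, so by the triangle inequality `h • y'` stays at
distance at least `l - d(y, y') ≥ π sinh r₀` from `y`. Hence the infimum of `d(y, h • y')` over `H`
agrees with `d(y, y')` once both are truncated at `π sinh r₀`, which is all the cosh formula sees;
the two distances have equal `cosh` and are nonnegative, so they are equal.
-/

open Real

theorem min_iInf_eq_of_forall_min_le {ι : Sort*} {f : ι → ℝ} {c : ℝ} (i₀ : ι)
    (hf : ∀ i, min c (f i₀) ≤ f i) : min c (⨅ i, f i) = min c (f i₀) := by
  have : Nonempty ι := ⟨i₀⟩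
  have hbdd : BddBelow (Set.range f) := ⟨min c (f i₀), Set.forall_mem_range.2 hf⟩
  refine le_antisymm (min_le_min_left c (ciInf_le hbdd i₀)) ?_
  exact le_min (min_le_left _ _) (le_ciInf hf)

section TranslationLength

variable {Y H : Type*} [PseudoMetricSpace Y] [Monoid H] [MulAction H Y] {l c : ℝ}

theorem le_dist_smul_of_translationLength (htl : ∀ h : H, h ≠ 1 → ∀ y : Y, l ≤ dist (h • y) y)
    {y y' : Y} (hdist : dist y y' ≤ l - c) {h : H} (hh : h ≠ 1) : c ≤ dist y (h • y') := by
  have := htl h hh y'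
  have := dist_triangle (h • y') y y'
  rw [dist_comm]
  linarith

theorem min_iInf_dist_smul_eq (htl : ∀ h : H, h ≠ 1 → ∀ y : Y, l ≤ dist (h • y) y)
    {y y' : Y} (hdist : dist y y' ≤ l - c) :
    min c (⨅ h : H, dist y (h • y')) = min c (dist y y') := by
  have key := min_iInf_eq_of_forall_min_le (f := fun h : H => dist y (h • y')) (c := c) 1
  simp only [one_smul] at key
  refine key fun h => ?_
  rcases eq_or_ne h 1 with rfl | hh
  · simp only [one_smul, min_le_right]
  · exact (min_le_left _ _).trans (le_dist_smul_of_translationLength htl hdist hh)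

end TranslationLength

theorem cone_quotient_local_isometry_general
    {Y : Type*} [MetricSpace Y] (H : Type*) [Group H] [MulAction H Y]
    (r₀ : ℝ) (hr₀ : 0 < r₀) (l : ℝ)
    (htl : ∀ h : H, h ≠ 1 → ∀ y : Y, l ≤ dist (h • y) y)
    -- the cone distance, characterized by the cosh formula
    (D : Y × ℝ → Y × ℝ → ℝ)
    (hD_nonneg : ∀ p q, 0 ≤ D p q)
    (hD : ∀ p q : Y × ℝ,
      Real.cosh (D p q) =
        Real.cosh p.2 * Real.cosh q.2 -
          Real.sinh p.2 * Real.sinh q.2 *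
            Real.cos (min π (dist p.1 q.1 / Real.sinh r₀)))
    -- the quotient distance is computed by the same formula with the
    -- quotient distance on Y (used without proof in the paper)
    (hquot : ∀ p q : Y × ℝ,
      Real.cosh (⨅ h : H, D p (h • q.1, q.2)) =
        Real.cosh p.2 * Real.cosh q.2 -
          Real.sinh p.2 * Real.sinh q.2 *
            Real.cos (min π ((⨅ h : H, dist p.1 (h • q.1)) / Real.sinh r₀))) :
    ∀ (y y' : Y) (r r' : ℝ), r ∈ Set.Icc 0 r₀ → r' ∈ Set.Icc 0 r₀ →
      dist y y' ≤ l - π * Real.sinh r₀ →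
      (⨅ h : H, D (y, r) (h • y', r')) = D (y, r) (y', r') := by
  intro y y' r r' _ _ hdist
  have hs : 0 < sinh r₀ := sinh_pos_iff.2 hr₀
  have htrunc : min π ((⨅ h : H, dist y (h • y')) / sinh r₀) = min π (dist y y' / sinh r₀) := by
    rw [← mul_div_cancel_right₀ π hs.ne', min_div_div_right hs.le, min_div_div_right hs.le,
      min_iInf_dist_smul_eq htl hdist]
  have hcosh : cosh (⨅ h : H, D (y, r) (h • y', r')) = cosh (D (y, r) (y', r')) := by
    simp only [hquot (y, r) (y', r'), hD (y, r) (y', r'), htrunc]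
  exact cosh_strictMonoOn.injOn (iInf_nonneg fun _ => hD_nonneg _ _) (hD_nonneg _ _) hcosh

/-- Local isometries in the quotient of a cone: if every nontrivial element of
`H` translates points of `Y` by at least `l ≥ 2π sinh r₀`, and two points of
the cone have base points at distance at most `l − π sinh r₀`, then their
distance in the quotient cone equals their distance in the cone. -/
theorem cone_quotient_local_isometry
    {Y : Type*} [MetricSpace Y] (H : Type*) [Group H] [MulAction H Y]
    (hisom : ∀ (h : H) (y y' : Y), dist (h • y) (h • y') = dist y y')
    (r₀ : ℝ) (hr₀ : 0 < r₀) (l : ℝ) (hl : 2 * π * Real.sinh r₀ ≤ l)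
    (htl : ∀ h : H, h ≠ 1 → ∀ y : Y, l ≤ dist (h • y) y)
    -- the cone distance, characterized by the cosh formula
    (D : Y × ℝ → Y × ℝ → ℝ)
    (hD_nonneg : ∀ p q, 0 ≤ D p q)
    (hD : ∀ p q : Y × ℝ,
      Real.cosh (D p q) =
        Real.cosh p.2 * Real.cosh q.2 -
          Real.sinh p.2 * Real.sinh q.2 *
            Real.cos (min π (dist p.1 q.1 / Real.sinh r₀)))
    -- the quotient distance is computed by the same formula with the
    -- quotient distance on Y (used without proof in the paper)
    (hquot : ∀ p q : Y × ℝ,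
      Real.cosh (⨅ h : H, D p (h • q.1, q.2)) =
        Real.cosh p.2 * Real.cosh q.2 -
          Real.sinh p.2 * Real.sinh q.2 *
            Real.cos (min π ((⨅ h : H, dist p.1 (h • q.1)) / Real.sinh r₀))) :
    ∀ (y y' : Y) (r r' : ℝ), r ∈ Set.Icc 0 r₀ → r' ∈ Set.Icc 0 r₀ →
      dist y y' ≤ l - π * Real.sinh r₀ →
      (⨅ h : H, D (y, r) (h • y', r')) = D (y, r) (y', r') :=
  cone_quotient_local_isometry_general H r₀ hr₀ l htl D hD_nonneg hD hquot
end
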